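/- arXiv:2311.08813 — 2 statements merged into one kernel-verified Lean document; each statement's English description precedes it below -/
import Mathlib

section
/- Under the hypotheses of the matching-test lemma (q prime, G cyclic of order q with generator P, H injective into Z_q*, r, h, β nonzero, y ∉ {0,1}), the distinguisher that, given b ∈ {0,1} and the trapdoor for keyword w_b, outputs 0 if the test value computed against a ciphertext for w0 matches C6(w0) and 1 otherwise, outputs b with probability 1; hence its distinguishing advantage is 1/2 (i.e., |Pr[b' = b] − 1/2| = 1/2). -/
open Classical

/-- The DCC-SE distinguisher: given a uniform bit `b` and the trapdoor for
keyword `w_b`, it outputs `0` iff the test value against a ciphertext for `w0`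
matches `C6 w0`. It always outputs `b`, hence its advantage `|Pr[b'=b] - 1/2|`
equals `1/2`. -/
theorem stmt3 {q : ℕ} [Fact q.Prime] {G : Type*} [AddCommGroup G] [Module (ZMod q) G]
    {W : Type*} (P : G) (hP : P ≠ 0) (hgen : ∀ g : G, ∃ a : ZMod q, g = a • P)
    (H : W → ZMod q) (hH : Function.Injective H) (hH0 : ∀ w, H w ≠ 0)
    (r h β y : ZMod q) (hr : r ≠ 0) (hh : h ≠ 0) (hβ : β ≠ 0)
    (hy0 : y ≠ 0) (hy1 : y ≠ 1)
    (w0 w1 : W) (hw : w0 ≠ w1)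
    -- trapdoor component for keyword `w`
    (T2 : W → ZMod q) (hT2 : ∀ w, T2 w = (y - 1)⁻¹ * β * H w)
    -- keyword used in the challenge trapdoor for bit `b` (false ↦ w0, true ↦ w1)
    (wb : Bool → W) (hwb : wb = fun b => if b then w1 else w0)
    -- test value computed by the adversary against its own ciphertext for w0
    (V : Bool → G) (hV : ∀ b, V b = (T2 (wb b) * (h / β)) • ((r * y - r) • P))
    (C6 : G) (hC6 : C6 = (r * h * H w0) • P)
    -- the distinguisher's output bit: 0 (false) iff the test matches
    (guess : Bool → Bool) (hguess : ∀ b, guess b = if V b = C6 then false else true) :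
    (∀ b : Bool, guess b = b) ∧
      |((Finset.univ.filter (fun b : Bool => guess b = b)).card : ℚ) /
          (Finset.univ : Finset Bool).card - 1 / 2| = 1 / 2 := by
  have hy' : y - 1 ≠ 0 := sub_ne_zero.mpr hy1
  have hVb : ∀ b, V b = (r * h * H (wb b)) • P := by
    intro b
    rw [hV, hT2, smul_smul]
    congr 1
    field_simp
  have key : ∀ b : Bool, guess b = b := by
    intro b
    rw [hguess]
    cases b with
    | false => simp [hVb, hC6, hwb]
    | true =>
      rw [if_neg]
      rw [hVb, hC6, hwb]
      intro hcontra
      simp only [if_true] at hcontra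
      have h1 : (r * h * H w1 - r * h * H w0) • P = 0 := by
        rw [sub_smul, hcontra, sub_self]
      rcases smul_eq_zero.mp h1 with h1 | h2
      · have h3 : r * h * (H w1 - H w0) = 0 := by ring_nf; ring_nf at h1; exact h1
        rcases mul_eq_zero.mp h3 with h4 | h5
        · exact mul_ne_zero hr hh h4
        · exact hw (hH (sub_eq_zero.mp h5)).symm
      · exact hP h2
  refine ⟨key, ?_⟩
  have : (Finset.univ.filter (fun b : Bool => guess b = b)) = Finset.univ := by
    ext b; simp [key b]
  rw [this]
  norm_num
end

section
/- Let G be an additive cyclic group of prime order q with generator P and let n ≥ 1. For nonzero r, β, h ∈ Z_q, scalars y_1, ..., y_n ∈ Z_q with y_i ∉ {0,1} for a fixed index i, and keyword hash value w ∈ Z_q, define C1 = r/β, C2 = h/β, C3 = r·P, C5 = Σ_{j=1}^n r·(y_j·P), T1 = Σ_{j ≠ i} β·(y_j·P), and T2 = (y_i − 1)⁻¹·β·w. Then ((C5 − C1·T1) − C3)·(T2·C2) = (r·h·w)·P. -/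
/-- General multi-receiver correctness identity of the DCC-SE Test algorithm:
with `C1 = r/β`, `C2 = h/β`, `C3 = r•P`, `C5 = ∑ j, r•(y j•P)`,
`T1 = ∑ j ≠ i, β•(y j•P)`, `T2 = (y i - 1)⁻¹*β*w`, one has
`((C5 - C1·T1) - C3)·(T2·C2) = (r*h*w)•P`. -/
theorem stmt6 {q : ℕ} [Fact q.Prime] {G : Type*} [AddCommGroup G] [Module (ZMod q) G]
    (P : G) (hP : P ≠ 0) (hgen : ∀ g : G, ∃ a : ZMod q, g = a • P)
    (n : ℕ) (hn : 1 ≤ n) (r β h w : ZMod q) (hr : r ≠ 0) (hβ : β ≠ 0) (hh : h ≠ 0)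
    (y : Fin n → ZMod q) (i : Fin n) (hyi0 : y i ≠ 0) (hyi1 : y i ≠ 1) :
    ((((y i - 1)⁻¹ * β * w) * (h / β)) •
        ((∑ j, r • (y j • P)) -
            (r / β) • (∑ j ∈ Finset.univ.erase i, β • (y j • P)) - r • P)) =
      (r * h * w) • P := by
  have h1 : y i - 1 ≠ 0 := sub_ne_zero.mpr hyi1
  have key : (∑ j, r • (y j • P)) -
      (r / β) • (∑ j ∈ Finset.univ.erase i, β • (y j • P)) - r • P
      = (r * (y i - 1)) • P := by
    rw [Finset.smul_sum]
    have : ∀ j ∈ Finset.univ.erase i, (r / β) • β • y j • P = r • (y j • P) := by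
      intro j _
      rw [smul_smul, smul_smul, smul_smul, div_mul_cancel₀ _ hβ]
    rw [Finset.sum_congr rfl this, ← Finset.sum_erase_add _ _ (Finset.mem_univ i)]
    rw [smul_smul, mul_sub, mul_one, sub_smul]
    abel
  rw [key, smul_smul]
  congr 1
  field_simp
end
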